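/- Let r ≥ 4 and let G be a graph on n vertices (n sufficiently large) with δ(G) ≥ ⌊n/2⌋ + (r-3). If there exists A ⊆ V(G) with |A| = ⌊n/2⌋ - 1 and ⟨A⟩_r = A, then m(G, r) = r. -/

import Mathlib

open Finset

open scoped Classical

noncomputable section

variable {V : Type*}

/-- Number of neighbours of `v` inside the set `A`. -/
def nbrsIn (G : SimpleGraph V) (A : Finset V) (v : V) : ℕ :=
  (A.filter (fun u => G.Adj v u)).card

/-- One step of the `r`-neighbour bootstrap process. -/
def bootStep [Fintype V] (G : SimpleGraph V) (r : ℕ) (A : Finset V) : Finset V :=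
  A ∪ Finset.univ.filter (fun v => r ≤ nbrsIn G A v)

/-- The sets `A_t` of the `r`-neighbour bootstrap process started at `A`. -/
def bootSeq [Fintype V] (G : SimpleGraph V) (r : ℕ) (A : Finset V) : ℕ → Finset V
  | 0 => A
  | t + 1 => bootStep G r (bootSeq G r A t)

/-- `A` is closed under the `r`-neighbour bootstrap rule. -/
def BootClosed (G : SimpleGraph V) (r : ℕ) (A : Finset V) : Prop :=
  ∀ v, r ≤ nbrsIn G A v → v ∈ A

/-- The `r`-neighbour bootstrap closure `⟨A⟩_r`: the smallest closed superset of `A`. -/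
def bootClosure [Fintype V] (G : SimpleGraph V) (r : ℕ) (A : Finset V) : Finset V :=
  Finset.univ.filter (fun v => ∀ B : Finset V, A ⊆ B → BootClosed G r B → v ∈ B)

/-- `m(G, r)`: the minimum size of a percolating set. -/
def minPerc [Fintype V] (G : SimpleGraph V) (r : ℕ) : ℕ :=
  sInf {k | ∃ A : Finset V, A.card = k ∧ bootClosure G r A = Finset.univ}

end

/-!
Let `B` be the complement of the closed set `A`, so `|B| ∈ {k + 1, k + 2}` with `k = ⌊n/2⌋`.
Closedness caps the `A`-degree of every `b ∈ B` at `r - 1`, so the degree bound makes `B` almost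
complete: `b` misses at most four vertices of `B`, itself included. Double counting the edges
between `A` and `B` gives `a ∈ A` with only `r - 1` neighbours in `B`; its degree then forces `a`
to be adjacent to all of `A \ {a}`. Seed with `a` and `r - 1` vertices of `B` adjacent to `r - 1`
chosen `B`-neighbours `N` of `a`. Then `N` is infected, giving `2r - 2 ≥ r` infected vertices in `B`;
their common neighbours, all but boundedly many vertices of `B`, follow, then all of `B`, and finally
every vertex of `A`, which sees `a` and at least `r - 1` vertices of `B`. Sets of fewer than `r`
vertices are closed, so no smaller set percolates.
-/

variable {V : Type*}

noncomputable section

/-- When `v ∈ B`, `v` itself is counted. -/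
def nonNbrsIn (G : SimpleGraph V) (B : Finset V) (v : V) : ℕ :=
  #(B.filter fun u => ¬ G.Adj v u)

def commonNbrsIn (G : SimpleGraph V) (B T : Finset V) : Finset V :=
  B.filter fun v => ∀ t ∈ T, G.Adj v t

end

section Neighbours

variable {G : SimpleGraph V} {r : ℕ} {A B C T : Finset V} {v : V}

lemma mem_commonNbrsIn : v ∈ commonNbrsIn G B T ↔ v ∈ B ∧ ∀ t ∈ T, G.Adj v t :=
  mem_filter

lemma commonNbrsIn_subset : commonNbrsIn G B T ⊆ B :=
  filter_subset _ _

lemma nbrsIn_add_nonNbrsIn (G : SimpleGraph V) (B : Finset V) (v : V) :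
    nbrsIn G B v + nonNbrsIn G B v = #B :=
  card_filter_add_card_filter_not _

lemma nbrsIn_mono (h : A ⊆ B) : nbrsIn G A v ≤ nbrsIn G B v :=
  card_le_card (filter_subset_filter _ h)

lemma nonNbrsIn_mono (h : A ⊆ B) : nonNbrsIn G A v ≤ nonNbrsIn G B v :=
  card_le_card (filter_subset_filter _ h)

lemma nbrsIn_le_card : nbrsIn G A v ≤ #A :=
  card_le_card (filter_subset _ _)

lemma nbrsIn_lt_card_of_mem (hv : v ∈ A) : nbrsIn G A v < #A :=
  card_lt_card ⟨filter_subset _ _, fun h => G.irrefl (mem_filter.1 (h hv)).2⟩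

lemma nbrsIn_eq_card (h : ∀ t ∈ T, G.Adj v t) : nbrsIn G T v = #T :=
  congrArg card (filter_true_of_mem h)

lemma nbrsIn_insert [DecidableEq V] {a : V} (hva : G.Adj v a) (ha : a ∉ B) :
    nbrsIn G (insert a B) v = nbrsIn G B v + 1 := by
  rw [nbrsIn, filter_insert, if_pos hva, card_insert_of_notMem (fun h => ha (mem_filter.1 h).1),
    nbrsIn]

lemma card_sub_nonNbrsIn_le_nbrsIn (hT : T ⊆ B) : #T - nonNbrsIn G B v ≤ nbrsIn G T v := by
  have := nbrsIn_add_nonNbrsIn G T v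
  have := nonNbrsIn_mono (G := G) (v := v) hT
  omega

lemma card_sub_mul_le_card_commonNbrsIn {d : ℕ} (hT : ∀ t ∈ T, nonNbrsIn G B t ≤ d) :
    #B - #T * d ≤ #(commonNbrsIn G B T) := by
  have hcover : B \ commonNbrsIn G B T ⊆ T.biUnion fun t => B.filter fun u => ¬ G.Adj t u := by
    intro v hv
    obtain ⟨hvB, hv⟩ := mem_sdiff.1 hv
    obtain ⟨t, ht, hvt⟩ : ∃ t ∈ T, ¬ G.Adj v t := by
      simpa [mem_commonNbrsIn, hvB] using hv
    exact mem_biUnion.2 ⟨t, ht, mem_filter.2 ⟨hvB, fun h => hvt h.symm⟩⟩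
  have hsdiff := le_card_sdiff (commonNbrsIn G B T) B
  have hsum : #(B \ commonNbrsIn G B T) ≤ ∑ t ∈ T, nonNbrsIn G B t :=
    (card_le_card hcover).trans card_biUnion_le
  have hbound : ∑ t ∈ T, nonNbrsIn G B t ≤ #T * d := by simpa using sum_le_card_nsmul T _ d hT
  omega

lemma nbrsIn_add_nbrsIn_compl [Fintype V] [DecidableEq V] (A : Finset V) (v : V) :
    nbrsIn G A v + nbrsIn G Aᶜ v = G.degree v := by
  rw [nbrsIn, nbrsIn, ← card_union_of_disjoint (disjoint_filter_filter disjoint_compl_right),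
    ← filter_union, union_compl, ← G.card_neighborFinset_eq_degree, G.neighborFinset_eq_filter]

lemma sum_nbrsIn_comm (A B : Finset V) : ∑ a ∈ A, nbrsIn G B a = ∑ b ∈ B, nbrsIn G A b := by
  simp only [nbrsIn, card_filter]
  rw [sum_comm]
  simp only [G.adj_comm]

lemma BootClosed.mem_of_le_nbrsIn (hC : BootClosed G r C) (hT : T ⊆ C) (h : r ≤ nbrsIn G T v) :
    v ∈ C :=
  hC v (h.trans (nbrsIn_mono hT))

lemma bootClosed_of_card_lt (h : #A < r) : BootClosed G r A :=
  fun _ hv => absurd (hv.trans nbrsIn_le_card) (not_le.2 h)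

lemma BootClosed.subset_of_dense {B : Finset V} {d : ℕ} (hC : BootClosed G r C)
    (hB : ∀ b ∈ B, nonNbrsIn G B b ≤ d) (hTB : T ⊆ B) (hTC : T ⊆ C) (hT : r ≤ #T)
    (hsize : r + (#T + 1) * d ≤ #B) : B ⊆ C := by
  have hWC : commonNbrsIn G B T ⊆ C := fun w hw =>
    hC.mem_of_le_nbrsIn hTC ((nbrsIn_eq_card (mem_commonNbrsIn.1 hw).2).symm ▸ hT)
  have hW := card_sub_mul_le_card_commonNbrsIn fun t ht => hB t (hTB ht)
  intro b hb
  apply hC.mem_of_le_nbrsIn hWC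
  have : #(commonNbrsIn G B T) - nonNbrsIn G B b ≤ nbrsIn G (commonNbrsIn G B T) b :=
    card_sub_nonNbrsIn_le_nbrsIn commonNbrsIn_subset
  have := hB b hb
  rw [add_one_mul] at hsize
  omega

end Neighbours

section Bootstrap

variable [Fintype V] {G : SimpleGraph V} {r : ℕ} {A S : Finset V}

lemma subset_bootClosure (G : SimpleGraph V) (r : ℕ) (A : Finset V) : A ⊆ bootClosure G r A :=
  fun _ hv => mem_filter.2 ⟨mem_univ _, fun _ hAB _ => hAB hv⟩

lemma bootClosed_bootClosure (G : SimpleGraph V) (r : ℕ) (A : Finset V) :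
    BootClosed G r (bootClosure G r A) := by
  refine fun v hv => mem_filter.2 ⟨mem_univ _, fun B hAB hB => hB v (hv.trans (nbrsIn_mono ?_))⟩
  exact fun x hx => (mem_filter.1 hx).2 B hAB hB

lemma BootClosed.bootClosure_eq (h : BootClosed G r A) : bootClosure G r A = A :=
  Subset.antisymm (fun _ hv => (mem_filter.1 hv).2 A Subset.rfl h) (subset_bootClosure G r A)

lemma minPerc_eq_of_percolating (hS : #S = r) (hperc : bootClosure G r S = univ) :
    minPerc G r = r := by
  refine le_antisymm (Nat.sInf_le ⟨S, hS, hperc⟩) (le_csInf ⟨r, S, hS, hperc⟩ ?_)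
  rintro _ ⟨T, rfl, hT⟩
  by_contra! hlt
  rw [(bootClosed_of_card_lt hlt).bootClosure_eq] at hT
  have := card_le_card (subset_univ S)
  rw [← hT] at this
  omega

end Bootstrap

section Threshold

variable [Fintype V] [DecidableEq V] {G : SimpleGraph V} {r δ : ℕ} {A : Finset V} {a v : V}

lemma nonNbrsIn_compl_add_lt (hA : BootClosed G r A) (hδ : δ ≤ G.minDegree) (hv : v ∉ A) :
    nonNbrsIn G Aᶜ v + δ < #Aᶜ + r := by
  have hlt : nbrsIn G A v < r := lt_of_not_ge fun h => hv (hA v h)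
  have := nbrsIn_add_nbrsIn_compl (G := G) A v
  have := nbrsIn_add_nonNbrsIn G Aᶜ v
  have := G.minDegree_le_degree v
  omega

lemma lt_card_add_nbrsIn_compl (hδ : δ ≤ G.minDegree) (hv : v ∈ A) :
    δ < #A + nbrsIn G Aᶜ v := by
  have := nbrsIn_lt_card_of_mem (G := G) hv
  have := nbrsIn_add_nbrsIn_compl (G := G) A v
  have := G.minDegree_le_degree v
  omega

lemma exists_nbrsIn_compl_lt (hA : BootClosed G r A) (h : (r - 1) * #Aᶜ < r * #A) :
    ∃ a ∈ A, nbrsIn G Aᶜ a < r := by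
  by_contra! hge
  have hlow : #A * r ≤ ∑ a ∈ A, nbrsIn G Aᶜ a := by simpa using card_nsmul_le_sum A _ r hge
  have hhigh : ∑ b ∈ Aᶜ, nbrsIn G A b ≤ #Aᶜ * (r - 1) := by
    refine (sum_le_card_nsmul Aᶜ _ (r - 1) fun b hb => ?_).trans_eq (smul_eq_mul _ _)
    exact Nat.le_sub_one_of_lt (lt_of_not_ge fun h => mem_compl.1 hb (hA b h))
  rw [sum_nbrsIn_comm] at hlow
  linarith

lemma adj_of_nbrsIn_compl_add_le (hδ : δ ≤ G.minDegree) (ha : a ∈ A)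
    (h : nbrsIn G Aᶜ a + #A ≤ δ + 1) (hv : v ∈ A) (hva : v ≠ a) : G.Adj a v := by
  have hsub : A.filter (fun u => G.Adj a u) ⊆ A.erase a := fun u hu =>
    mem_erase.2 ⟨(mem_filter.1 hu).2.ne', (mem_filter.1 hu).1⟩
  have hcard : #(A.erase a) ≤ #(A.filter fun u => G.Adj a u) := by
    have hdeg := nbrsIn_add_nbrsIn_compl (G := G) A a
    have := G.minDegree_le_degree a
    rw [card_erase_of_mem ha]
    rw [nbrsIn] at hdeg
    omega
  exact (mem_filter.1 ((eq_of_subset_of_card_le hsub hcard).symm ▸ mem_erase.2 ⟨hva, hv⟩)).2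

lemma BootClosed.eq_univ_of_compl_subset {C : Finset V} (hC : BootClosed G r C) (ha : a ∈ A)
    (hadj : ∀ v ∈ A, v ≠ a → G.Adj a v) (hdeg : ∀ v ∈ A, r - 1 ≤ nbrsIn G Aᶜ v) (haC : a ∈ C)
    (hcompl : Aᶜ ⊆ C) : C = univ := by
  have hAC : A ⊆ C := by
    intro v hv
    by_cases hva : v = a
    · exact hva ▸ haC
    · refine hC.mem_of_le_nbrsIn (insert_subset haC hcompl) ?_
      rw [nbrsIn_insert (hadj v hv hva).symm (notMem_compl.2 ha)]
      have := hdeg v hv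
      omega
  rw [← univ_subset_iff, ← union_compl A]
  exact union_subset hAC hcompl

lemma exists_percolating_of_dense_compl {d : ℕ} (hr : 2 ≤ r) (ha : a ∈ A)
    (hadj : ∀ v ∈ A, v ≠ a → G.Adj a v) (hdeg : ∀ v ∈ A, r - 1 ≤ nbrsIn G Aᶜ v)
    (hnon : ∀ b ∈ Aᶜ, nonNbrsIn G Aᶜ b ≤ d) (hsize : r + (2 * r - 1) * d ≤ #Aᶜ) :
    ∃ S : Finset V, #S = r ∧ bootClosure G r S = univ := by
  obtain ⟨N, hNa, hN⟩ := exists_subset_card_eq (hdeg a ha)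
  have hNc : N ⊆ Aᶜ := hNa.trans (filter_subset _ _)
  have hcommon : r - 1 ≤ #(commonNbrsIn G Aᶜ N) := by
    have := card_sub_mul_le_card_commonNbrsIn fun t ht => hnon t (hNc ht)
    have : (r - 1) * d ≤ (2 * r - 1) * d := Nat.mul_le_mul_right d (by omega)
    rw [hN] at *
    omega
  obtain ⟨M, hMN, hM⟩ := exists_subset_card_eq hcommon
  have hMc : M ⊆ Aᶜ := hMN.trans commonNbrsIn_subset
  have haM : a ∉ M := fun h => mem_compl.1 (hMc h) ha
  refine ⟨insert a M, by rw [card_insert_of_notMem haM]; omega, ?_⟩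
  set C := bootClosure G r (insert a M)
  have hC : BootClosed G r C := bootClosed_bootClosure G r (insert a M)
  have hSC : insert a M ⊆ C := subset_bootClosure G r (insert a M)
  have hNC : N ⊆ C := fun v hv => hC.mem_of_le_nbrsIn hSC <| by
    rw [nbrsIn_eq_card, card_insert_of_notMem haM, hM]
    · omega
    intro t ht
    rcases mem_insert.1 ht with rfl | ht
    · exact (mem_filter.1 (hNa hv)).2.symm
    · exact ((mem_commonNbrsIn.1 (hMN ht)).2 v hv).symm
  have hMN_disj : Disjoint M N :=
    disjoint_left.2 fun b hb hbN => G.irrefl ((mem_commonNbrsIn.1 (hMN hb)).2 b hbN)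
  have hcompl : Aᶜ ⊆ C := by
    refine hC.subset_of_dense hnon (union_subset hMc hNc)
      (union_subset ((subset_insert a M).trans hSC) hNC) ?_ ?_ <;>
      rw [card_union_of_disjoint hMN_disj, hM, hN]
    · omega
    · rwa [show r - 1 + (r - 1) + 1 = 2 * r - 1 by omega]
  exact hC.eq_univ_of_compl_subset ha hadj hdeg (hSC (mem_insert_self a M)) hcompl

end Threshold

theorem stmt_15 (r : ℕ) (hr : 4 ≤ r) :
    ∃ N : ℕ, ∀ n : ℕ, N ≤ n → ∀ G : SimpleGraph (Fin n),
      n / 2 + (r - 3) ≤ G.minDegree →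
      ∀ A : Finset (Fin n), A.card = n / 2 - 1 → bootClosure G r A = A →
        minPerc G r = r := by
  refine ⟨18 * r, fun n hn G hδ A hA hAcl => ?_⟩
  have hclosed : BootClosed G r A := hAcl ▸ bootClosed_bootClosure G r A
  have hAc : #Aᶜ = n - (n / 2 - 1) := by rw [card_compl, Fintype.card_fin, hA]
  have hsmall : (r - 1) * #Aᶜ < r * #A := by
    obtain ⟨k, hk⟩ : ∃ k, n / 2 = k + 1 := ⟨n / 2 - 1, by omega⟩
    obtain ⟨s, rfl⟩ : ∃ s, r = s + 1 := ⟨r - 1, by omega⟩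
    have hAc' : #Aᶜ ≤ k + 3 := by omega
    rw [hA, hk, Nat.add_sub_cancel, Nat.add_sub_cancel]
    have hk' : 3 * s < k := by omega
    nlinarith [Nat.mul_le_mul_left s hAc']
  obtain ⟨a, ha, har⟩ := exists_nbrsIn_compl_lt hclosed hsmall
  obtain ⟨S, hS, hperc⟩ := exists_percolating_of_dense_compl (r := r) (d := 4) (by omega) ha
    (fun v hv hva => adj_of_nbrsIn_compl_add_le hδ ha (by rw [hA]; omega) hv hva)
    (fun v hv => by have := lt_card_add_nbrsIn_compl hδ hv; omega)
    (fun b hb => by have := nonNbrsIn_compl_add_lt hclosed hδ (mem_compl.1 hb); omega)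
    (by omega)
  exact minPerc_eq_of_percolating hS hperc
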